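/- arXiv:1407.8040 — 2 statements merged into one kernel-verified Lean document; each statement's English description precedes it below -/
import Mathlib

section
/- (1-D exact unwrapping) Under the Itoh condition x(j+1) − x(j) ∈ [−π, π) for all j, the true phase can be recovered from the wrapped observations by summation: x(n) = x(0) + Σ_{j=0}^{n−1} W(y(j+1) − y(j)), where y = W ∘ x. -/
open Real

/-- Centralized wrapping operator: `W(λ) = ((λ + π) mod 2π) − π`. -/
noncomputable def wrap (l : ℝ) : ℝ := (l + π) - 2 * π * ⌊(l + π) / (2 * π)⌋ - π

lemma wrap_add_int (l : ℝ) (k : ℤ) : wrap (l + 2 * π * k) = wrap l := by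
  unfold wrap
  have h2π : (2 : ℝ) * π ≠ 0 := by positivity
  have : (l + 2 * π * k + π) / (2 * π) = (l + π) / (2 * π) + k := by
    field_simp; ring
  rw [this, Int.floor_add_intCast]
  push_cast
  ring

lemma wrap_eq_self {l : ℝ} (h : l ∈ Set.Ico (-π) π) : wrap l = l := by
  obtain ⟨h1, h2⟩ := h
  unfold wrap
  have hπ : (0:ℝ) < 2 * π := by positivity
  have hfl : ⌊(l + π) / (2 * π)⌋ = 0 := by
    rw [Int.floor_eq_zero_iff]
    constructor
    · exact div_nonneg (by linarith) (le_of_lt hπ)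
    · rw [div_lt_one hπ]; linarith
  rw [hfl]; push_cast; ring

theorem exact_unwrapping_one_dim (x : ℕ → ℝ) (y : ℕ → ℝ) (hy : ∀ j, y j = wrap (x j))
    (hitoh : ∀ j, x (j + 1) - x j ∈ Set.Ico (-π) π) (n : ℕ) :
    x n = x 0 + ∑ j ∈ Finset.range n, wrap (y (j + 1) - y j) := by
  have key : ∀ j, wrap (y (j + 1) - y j) = x (j + 1) - x j := by
    intro j
    have hdiff : y (j + 1) - y j
        = (x (j + 1) - x j) + 2 * π * (⌊(x j + π) / (2 * π)⌋ - ⌊(x (j+1) + π) / (2 * π)⌋ : ℤ) := by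
      rw [hy, hy]; unfold wrap; push_cast; ring
    rw [hdiff, wrap_add_int, wrap_eq_self (hitoh j)]
  induction n with
  | zero => simp
  | succ m ih =>
    rw [Finset.sum_range_succ, key m, ← add_assoc, ← ih]; ring
end

section
/- The Euclidean projection of ζ ∈ ℝ^M onto C₂ = { z : ‖q − z‖₁ ≤ ε } equals ζ itself if ‖ζ − q‖₁ ≤ ε, and otherwise equals q + soft_{λ}(ζ − q) componentwise, where λ > 0 is the unique solution of Σᵢ max(0, |ζᵢ − qᵢ| − λ) = ε. -/
/-- Euclidean projection onto the ℓ¹-ball `C₂ = {z : ‖q − z‖₁ ≤ ε}`. -/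
theorem proj_l1_ball {M : ℕ} (q ζ : Fin M → ℝ) (ε : ℝ) (hε : 0 < ε) :
    (∑ i, |ζ i - q i| ≤ ε →
      (∑ i, |q i - ζ i| ≤ ε ∧
        ∀ z : Fin M → ℝ, ∑ i, |q i - z i| ≤ ε → ∑ i, (ζ i - ζ i) ^ 2 ≤ ∑ i, (z i - ζ i) ^ 2)) ∧
    (∑ i, |ζ i - q i| > ε → ∀ lam : ℝ, 0 < lam →
      (∑ i, max 0 (|ζ i - q i| - lam) = ε) →
      let p : Fin M → ℝ := fun i => q i + Real.sign (ζ i - q i) * max (|ζ i - q i| - lam) 0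
      (∑ i, |q i - p i| ≤ ε ∧
        ∀ z : Fin M → ℝ, ∑ i, |q i - z i| ≤ ε →
          (∑ i, (p i - ζ i) ^ 2 ≤ ∑ i, (z i - ζ i) ^ 2 ∧
           (z ≠ p → ∑ i, (p i - ζ i) ^ 2 < ∑ i, (z i - ζ i) ^ 2)))) := by
  constructor
  · intro h
    refine ⟨by simpa [abs_sub_comm] using h, fun z hz => ?_⟩
    simp only [sub_self]
    have : (0:ℝ) ≤ ∑ i, (z i - ζ i) ^ 2 :=
      Finset.sum_nonneg fun i _ => sq_nonneg _
    simpa using this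
  · intro hgt lam hlam hsum
    intro p
    -- basic per-coordinate facts
    have hm0 : ∀ i, (0:ℝ) ≤ max (|ζ i - q i| - lam) 0 := fun i => le_max_right _ _
    have habs : ∀ i, |p i - q i| = max (|ζ i - q i| - lam) 0 := by
      intro i
      have hp : p i - q i = Real.sign (ζ i - q i) * max (|ζ i - q i| - lam) 0 := by
        simp [p]
      rw [hp, abs_mul, abs_of_nonneg (hm0 i)]
      rcases lt_trichotomy (ζ i - q i) 0 with h | h | h
      · rw [Real.sign_of_neg h]; norm_num
      · rw [h]; simp [Real.sign_zero]
        exact hlam.le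
      · rw [Real.sign_of_pos h]; norm_num
    have hsum' : ∑ i, max (|ζ i - q i| - lam) 0 = ε := by
      rw [← hsum]; exact Finset.sum_congr rfl fun i _ => (max_comm _ _)
    have hmem : ∑ i, |q i - p i| = ε := by
      rw [← hsum']
      exact Finset.sum_congr rfl fun i _ => by rw [abs_sub_comm, habs i]
    have hle : ∀ i, |ζ i - p i| ≤ lam := by
      intro i
      have hp : ζ i - p i = (ζ i - q i) - Real.sign (ζ i - q i) * max (|ζ i - q i| - lam) 0 := by
        simp [p]; ring
      rcases le_or_gt (|ζ i - q i|) lam with h | h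
      · have : max (|ζ i - q i| - lam) 0 = 0 := max_eq_right (by linarith)
        rw [hp, this, mul_zero, sub_zero]; exact h
      · have hmax : max (|ζ i - q i| - lam) 0 = |ζ i - q i| - lam :=
          max_eq_left (by linarith)
        have hne : ζ i - q i ≠ 0 := by
          intro h0; rw [h0] at h; simp at h; linarith
        rcases lt_trichotomy (ζ i - q i) 0 with hc | hc | hc
        · rw [hp, hmax, Real.sign_of_neg hc, abs_of_neg hc]
          rw [abs_le]; constructor <;> nlinarith
        · exact absurd hc hne
        · rw [hp, hmax, Real.sign_of_pos hc, abs_of_pos hc]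
          rw [abs_le]; constructor <;> nlinarith
    have hprod : ∀ i, (ζ i - p i) * (p i - q i) = lam * max (|ζ i - q i| - lam) 0 := by
      intro i
      have hp1 : p i - q i = Real.sign (ζ i - q i) * max (|ζ i - q i| - lam) 0 := by
        simp [p]
      have hp2 : ζ i - p i = (ζ i - q i) - Real.sign (ζ i - q i) * max (|ζ i - q i| - lam) 0 := by
        simp [p]; ring
      rcases le_or_gt (|ζ i - q i|) lam with h | h
      · have : max (|ζ i - q i| - lam) 0 = 0 := max_eq_right (by linarith)
        rw [hp1, this]; ring
      · have hmax : max (|ζ i - q i| - lam) 0 = |ζ i - q i| - lam :=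
          max_eq_left (by linarith)
        rcases lt_trichotomy (ζ i - q i) 0 with hc | hc | hc
        · rw [hp1, hp2, hmax, Real.sign_of_neg hc, abs_of_neg hc]; ring
        · exfalso; rw [hc] at h; simp at h; linarith
        · rw [hp1, hp2, hmax, Real.sign_of_pos hc, abs_of_pos hc]; ring
    refine ⟨le_of_eq hmem, fun z hz => ?_⟩
    -- variational inequality
    have hVI : ∑ i, (ζ i - p i) * (z i - p i) ≤ 0 := by
      have hsplit : ∑ i, (ζ i - p i) * (z i - p i)
          = (∑ i, (ζ i - p i) * (z i - q i)) - ∑ i, (ζ i - p i) * (p i - q i) := by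
        rw [← Finset.sum_sub_distrib]
        exact Finset.sum_congr rfl fun i _ => by ring
      have h2 : ∑ i, (ζ i - p i) * (p i - q i) = lam * ε := by
        rw [Finset.sum_congr rfl fun i _ => hprod i, ← Finset.mul_sum, hsum']
      have h1 : ∑ i, (ζ i - p i) * (z i - q i) ≤ lam * ε := by
        calc ∑ i, (ζ i - p i) * (z i - q i)
            ≤ ∑ i, lam * |q i - z i| := by
              refine Finset.sum_le_sum fun i _ => ?_
              calc (ζ i - p i) * (z i - q i) ≤ |(ζ i - p i) * (z i - q i)| := le_abs_self _
                _ = |ζ i - p i| * |q i - z i| := by rw [abs_mul, abs_sub_comm (z i)]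
                _ ≤ lam * |q i - z i| :=
                    mul_le_mul_of_nonneg_right (hle i) (abs_nonneg _)
          _ = lam * ∑ i, |q i - z i| := by rw [Finset.mul_sum]
          _ ≤ lam * ε := mul_le_mul_of_nonneg_left hz hlam.le
      rw [hsplit, h2]; linarith
    have hexp : ∑ i, (z i - ζ i) ^ 2
        = (∑ i, (z i - p i) ^ 2) + (∑ i, (p i - ζ i) ^ 2)
          - 2 * ∑ i, (ζ i - p i) * (z i - p i) := by
      rw [Finset.mul_sum, ← Finset.sum_add_distrib, ← Finset.sum_sub_distrib]
      exact Finset.sum_congr rfl fun i _ => by ring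
    have hzp : (0:ℝ) ≤ ∑ i, (z i - p i) ^ 2 := Finset.sum_nonneg fun i _ => sq_nonneg _
    constructor
    · rw [hexp]; linarith
    · intro hne
      have : ∃ j, z j ≠ p j := by
        by_contra hc
        push_neg at hc
        exact hne (funext hc)
      obtain ⟨j, hj⟩ := this
      have hpos : (0:ℝ) < ∑ i, (z i - p i) ^ 2 := by
        refine Finset.sum_pos' (fun i _ => sq_nonneg _) ⟨j, Finset.mem_univ j, ?_⟩
        have := sub_ne_zero.mpr hj
        positivity
      rw [hexp]; linarith
end
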